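/- Let T and S be 2-uniform tolerances on a lattice L without infinite chains. If T and S are amicable, then T∘S ⊆ S∘T. -/
import Mathlib


def IsTolerance {L : Type*} [Lattice L] (T : L → L → Prop) : Prop :=
  (∀ x, T x x) ∧ (∀ x y, T x y → T y x) ∧
  (∀ a b c d, T a b → T c d → T (a ⊔ c) (b ⊔ d) ∧ T (a ⊓ c) (b ⊓ d))

def IsBlock {L : Type*} [Lattice L] (T : L → L → Prop) (X : Set L) : Prop :=
  (∀ x ∈ X, ∀ y ∈ X, T x y) ∧
  ∀ Y : Set L, X ⊆ Y → (∀ x ∈ Y, ∀ y ∈ Y, T x y) → Y = X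

def IsTwoUniform {L : Type*} [Lattice L] (T : L → L → Prop) : Prop :=
  IsTolerance T ∧ ∀ X : Set L, IsBlock T X → ∃ a b : L, a ≠ b ∧ X = {a, b}

def NoInfiniteChains (L : Type*) [Lattice L] : Prop :=
  ∀ C : Set L, IsChain (· ≤ ·) C → C.Finite

def Comp {L : Type*} (T S : L → L → Prop) : L → L → Prop :=
  fun x z => ∃ y, T x y ∧ S y z

def IsLowerNbr {L : Type*} [Lattice L] (R : L → L → Prop) (v u : L) : Prop :=
  v ⋖ u ∧ IsBlock R {v, u}

def IsUpperNbr {L : Type*} [Lattice L] (R : L → L → Prop) (w u : L) : Prop :=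
  u ⋖ w ∧ IsBlock R {u, w}

def IsRTop {L : Type*} [Lattice L] (R : L → L → Prop) (u : L) : Prop :=
  ∃ v, IsLowerNbr R v u

def IsRBottom {L : Type*} [Lattice L] (R : L → L → Prop) (u : L) : Prop :=
  ∃ w, IsUpperNbr R w u

def Amicable {L : Type*} [Lattice L] (T S : L → L → Prop) : Prop :=
  (∀ u v, IsRTop T u → IsRTop S u → u ⋖ v → (T u v ∨ S u v) →
    IsRTop T v ∧ IsRTop S v) ∧
  (∀ u v, IsRBottom T u → IsRBottom S u → v ⋖ u → (T v u ∨ S v u) →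
    IsRBottom T v ∧ IsRBottom S v)

def IsCongruence {L : Type*} [Lattice L] (T : L → L → Prop) : Prop :=
  Equivalence T ∧
  ∀ a b c d, T a b → T c d → T (a ⊔ c) (b ⊔ d) ∧ T (a ⊓ c) (b ⊓ d)

def IsTwoUniformCongruence {L : Type*} [Lattice L] (T : L → L → Prop) : Prop :=
  IsCongruence T ∧ ∀ x : L, ∃ a b : L, a ≠ b ∧ (∀ y, T x y ↔ y = a ∨ y = b)

section AmicableHelpers

variable {L : Type*} [Lattice L] {R : L → L → Prop}


lemma tol_refl (hR : IsTwoUniform R) : ∀ x, R x x := hR.1.1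
lemma tol_symm (hR : IsTwoUniform R) : ∀ x y, R x y → R y x := hR.1.2.1
lemma tol_sup (hR : IsTwoUniform R) {a b c d : L} (h1 : R a b) (h2 : R c d) :
    R (a ⊔ c) (b ⊔ d) := (hR.1.2.2 a b c d h1 h2).1
lemma tol_inf (hR : IsTwoUniform R) {a b c d : L} (h1 : R a b) (h2 : R c d) :
    R (a ⊓ c) (b ⊓ d) := (hR.1.2.2 a b c d h1 h2).2

lemma block_rel {a b : L} (h : IsBlock R {a, b}) : R a b :=
  h.1 a (Set.mem_insert _ _) b (by simp)

lemma block_rel' {a b : L} (h : IsBlock R {a, b}) : R b a :=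
  h.1 b (by simp) a (Set.mem_insert _ _)

lemma exists_block (hR : IsTwoUniform R) (X : Set L)
    (hX : ∀ x ∈ X, ∀ y ∈ X, R x y) : ∃ B, X ⊆ B ∧ IsBlock R B := by
  have hzorn : ∀ c ⊆ {Y : Set L | X ⊆ Y ∧ ∀ x ∈ Y, ∀ y ∈ Y, R x y},
      IsChain (· ⊆ ·) c → c.Nonempty →
      ∃ ub ∈ {Y : Set L | X ⊆ Y ∧ ∀ x ∈ Y, ∀ y ∈ Y, R x y}, ∀ s ∈ c, s ⊆ ub := by
    intro c hcS hchain hcne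
    refine ⟨⋃₀ c, ⟨?_, ?_⟩, fun s hs => Set.subset_sUnion_of_mem hs⟩
    · obtain ⟨s, hs⟩ := hcne
      exact (hcS hs).1.trans (Set.subset_sUnion_of_mem hs)
    · rintro a ⟨s, hs, has⟩ b ⟨t, ht, hbt⟩
      rcases hchain.total hs ht with h | h
      · exact (hcS ht).2 a (h has) b hbt
      · exact (hcS hs).2 a has b (h hbt)
  obtain ⟨m, hXm, hm⟩ := zorn_subset_nonempty
      {Y : Set L | X ⊆ Y ∧ ∀ x ∈ Y, ∀ y ∈ Y, R x y} hzorn X ⟨Set.Subset.rfl, hX⟩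
  refine ⟨m, hXm, hm.prop.2, ?_⟩
  intro Y hmY hY
  exact Set.Subset.antisymm (hm.2 ⟨hXm.trans hmY, hY⟩ hmY) hmY

lemma pair_block (hR : IsTwoUniform R) {x y : L} (hxy : R x y) (hne : x ≠ y) :
    IsBlock R {x, y} := by
  have hcl : ∀ u ∈ ({x, y} : Set L), ∀ v ∈ ({x, y} : Set L), R u v := by
    rintro u (rfl | rfl) v (rfl | rfl)
    exacts [tol_refl hR _, hxy, tol_symm hR _ _ hxy, tol_refl hR _]
  obtain ⟨B, hsub, hB⟩ := exists_block hR {x, y} hcl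
  obtain ⟨a, b, hab, rfl⟩ := hR.2 B hB
  have hx : x = a ∨ x = b := by simpa using hsub (Set.mem_insert _ _)
  have hy : y = a ∨ y = b := by simpa using hsub (by simp)
  have hpair : ({x, y} : Set L) = {a, b} := by
    rcases hx with rfl | rfl <;> rcases hy with rfl | rfl
    · exact absurd rfl hne
    · rfl
    · exact Set.pair_comm _ _
    · exact absurd rfl hne
  rw [hpair]; exact hB

lemma block_comparable (hR : IsTwoUniform R) {a b : L} (h : IsBlock R {a, b}) :
    a ≤ b ∨ b ≤ a := by
  have hab : R a b := block_rel h
  have hba : R b a := block_rel' h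
  have haa : R a a := tol_refl hR a
  have hbb : R b b := tol_refl hR b
  have hja : R (a ⊔ b) a := by simpa using tol_sup hR haa hba
  have hjb : R (a ⊔ b) b := by simpa using tol_sup hR hab hbb
  have hY := h.2 (insert (a ⊔ b) {a, b}) (Set.subset_insert _ _) ?_
  · have hmem : a ⊔ b ∈ ({a, b} : Set L) := hY ▸ Set.mem_insert _ _
    simp only [Set.mem_insert_iff, Set.mem_singleton_iff] at hmem
    rcases hmem with h1 | h1
    · exact Or.inr (sup_eq_left.mp h1)
    · exact Or.inl (sup_eq_right.mp h1)
  · rintro u (rfl | rfl | rfl) v (rfl | rfl | rfl)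
    exacts [tol_refl hR _, hja, hjb, tol_symm hR _ _ hja, haa, hab,
      tol_symm hR _ _ hjb, hba, hbb]

lemma block_covBy (hR : IsTwoUniform R) {a b : L} (h : IsBlock R {a, b})
    (hab : a < b) : a ⋖ b := by
  refine ⟨hab, fun c hac hcb => ?_⟩
  have hRab := block_rel h
  have hac' : R a c := by
    have h0 := tol_inf hR hRab (tol_refl hR c)
    rwa [inf_eq_left.mpr hac.le, inf_eq_right.mpr hcb.le] at h0
  have hcb' : R c b := by
    have h0 := tol_sup hR hRab (tol_refl hR c)
    rwa [sup_eq_right.mpr hac.le, sup_eq_left.mpr hcb.le] at h0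
  have hY := h.2 (insert c {a, b}) (Set.subset_insert _ _) ?_
  · have hmem : c ∈ ({a, b} : Set L) := hY ▸ Set.mem_insert _ _
    simp only [Set.mem_insert_iff, Set.mem_singleton_iff] at hmem
    rcases hmem with rfl | rfl
    · exact lt_irrefl _ hac
    · exact lt_irrefl _ hcb
  · rintro u (rfl | rfl | rfl) v (rfl | rfl | rfl)
    exacts [tol_refl hR _, tol_symm hR _ _ hac', hcb', hac', tol_refl hR _, hRab,
      tol_symm hR _ _ hcb', tol_symm hR _ _ hRab, tol_refl hR _]

lemma rel_lt (hR : IsTwoUniform R) {a b : L} (h : R a b) (hlt : a < b) :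
    a ⋖ b ∧ IsBlock R {a, b} := by
  have hblk := pair_block hR h hlt.ne
  exact ⟨block_covBy hR hblk hlt, hblk⟩

lemma rel_cases (hR : IsTwoUniform R) {a b : L} (h : R a b) :
    a = b ∨ (a ⋖ b ∧ IsBlock R {a, b}) ∨ (b ⋖ a ∧ IsBlock R {b, a}) := by
  by_cases hab : a = b
  · exact Or.inl hab
  · have hblk := pair_block hR h hab
    rcases block_comparable hR hblk with hle | hle
    · exact Or.inr (Or.inl ⟨block_covBy hR hblk (lt_of_le_of_ne hle hab), hblk⟩)
    · have hblk' : IsBlock R {b, a} := Set.pair_comm a b ▸ hblk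
      exact Or.inr (Or.inr ⟨block_covBy hR hblk' (lt_of_le_of_ne hle (Ne.symm hab)), hblk'⟩)


lemma top_or_bottom (hR : IsTwoUniform R) (x : L) : IsRTop R x ∨ IsRBottom R x := by
  obtain ⟨B, hxB, hB⟩ := exists_block hR {x}
    (by rintro a rfl b rfl; exact tol_refl hR _)
  obtain ⟨a, b, hab, rfl⟩ := hR.2 B hB
  have hx : x ∈ ({a, b} : Set L) := hxB rfl
  simp only [Set.mem_insert_iff, Set.mem_singleton_iff] at hx
  rcases block_comparable hR hB with hle | hle
  · have hcov := block_covBy hR hB (lt_of_le_of_ne hle hab)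
    rcases hx with rfl | rfl
    · exact Or.inr ⟨b, hcov, hB⟩
    · exact Or.inl ⟨a, hcov, hB⟩
  · have hB' : IsBlock R {b, a} := Set.pair_comm a b ▸ hB
    have hcov := block_covBy hR hB' (lt_of_le_of_ne hle (Ne.symm hab))
    rcases hx with rfl | rfl
    · exact Or.inl ⟨b, hcov, hB'⟩
    · exact Or.inr ⟨a, hcov, hB'⟩

lemma amic_symm {T S : L → L → Prop} (h : Amicable T S) : Amicable S T :=
  ⟨fun u v h1 h2 h3 h4 => (h.1 u v h2 h1 h3 h4.symm).symm,
   fun u v h1 h2 h3 h4 => (h.2 u v h2 h1 h3 h4.symm).symm⟩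

lemma wf_lt (hL : NoInfiniteChains L) : WellFounded ((· < ·) : L → L → Prop) := by
  rw [RelEmbedding.wellFounded_iff_isEmpty]
  constructor
  intro f
  have hchain : IsChain (· ≤ ·) (Set.range fun n => f n) := by
    rintro _ ⟨m, rfl⟩ _ ⟨n, rfl⟩ hne
    rcases lt_trichotomy m n with h | h | h
    · exact Or.inr (f.map_rel_iff.mpr h).le
    · exact absurd (congrArg f h) hne
    · exact Or.inl (f.map_rel_iff.mpr h).le
  exact Set.infinite_range_of_injective f.injective (hL _ hchain)

lemma wf_gt (hL : NoInfiniteChains L) : WellFounded ((· > ·) : L → L → Prop) := by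
  rw [RelEmbedding.wellFounded_iff_isEmpty]
  constructor
  intro f
  have hchain : IsChain (· ≤ ·) (Set.range fun n => f n) := by
    rintro _ ⟨m, rfl⟩ _ ⟨n, rfl⟩ hne
    rcases lt_trichotomy m n with h | h | h
    · exact Or.inl (f.map_rel_iff.mpr h).le
    · exact absurd (congrArg f h) hne
    · exact Or.inr (f.map_rel_iff.mpr h).le
  exact Set.infinite_range_of_injective f.injective (hL _ hchain)
end AmicableHelpers

lemma key {L : Type*} [Lattice L] (hwf : WellFounded ((· < ·) : L → L → Prop)) :
    ∀ x : L, ∀ T S : L → L → Prop, IsTwoUniform T → IsTwoUniform S → Amicable T S →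
      ∀ y z : L, x ⋖ y → y ⋖ z → IsBlock T {x, y} → IsBlock S {y, z} →
      ∃ w, S x w ∧ T w z := by
  refine fun x => hwf.induction
    (C := fun x => ∀ T S : L → L → Prop, IsTwoUniform T → IsTwoUniform S → Amicable T S →
      ∀ y z : L, x ⋖ y → y ⋖ z → IsBlock T {x, y} → IsBlock S {y, z} →
      ∃ w, S x w ∧ T w z) x ?_
  intro x IH T S hT hS hami y z hxy hyz hbT hbS
  have Txy : T x y := block_rel hbT
  have Syz : S y z := block_rel hbS
  have step : ∀ v, v ⋖ z → IsBlock T {v, z} → v ≠ y → ∃ w, S x w ∧ T w z := by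
    intro v hvz hbvz hvy
    have Tvz : T v z := block_rel hbvz
    have h1 : T (x ⊓ v) (y ⊓ z) := tol_inf hT Txy Tvz
    rw [inf_eq_left.mpr hyz.le] at h1
    have hxv : x ⊓ v = x := by
      rcases eq_or_lt_of_le (inf_le_left : x ⊓ v ≤ x) with h | h
      · exact h
      · have hlt : x ⊓ v < y := h.trans hxy.lt
        have hcov := (rel_lt hT h1 hlt).1
        exact absurd hxy.lt (hcov.2 h)
    have hxlev : x ≤ v := hxv ▸ inf_le_right
    have hyv : y ⊓ v = x := by
      have hle : x ≤ y ⊓ v := le_inf hxy.le hxlev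
      rcases eq_or_lt_of_le hle with h | h
      · exact h.symm
      · exfalso
        have hylev : ¬ y ≤ v := by
          intro hh
          rcases eq_or_lt_of_le hh with h' | h'
          · exact hvy h'.symm
          · exact hyz.2 h' hvz.lt
        have hlt2 : y ⊓ v < y :=
          lt_of_le_of_ne inf_le_left (fun hh => hylev (hh ▸ inf_le_right))
        exact hxy.2 h hlt2
    have h2 : S (y ⊓ v) (z ⊓ v) := tol_inf hS Syz (tol_refl hS v)
    rw [hyv, inf_eq_right.mpr hvz.le] at h2
    exact ⟨v, h2, Tvz⟩
  by_cases hbot : IsRBottom S x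
  · obtain ⟨w, hxw, hbw⟩ := hbot
    have Sxw : S x w := block_rel hbw
    by_cases hwy : w = y
    · subst hwy
      have htT : IsRTop T w := ⟨x, hxy, hbT⟩
      have htS : IsRTop S w := ⟨x, hxy, hbw⟩
      obtain ⟨htTz, -⟩ := hami.1 w z htT htS hyz (Or.inr Syz)
      obtain ⟨v, hvz, hbvz⟩ := htTz
      by_cases hvy : v = w
      · subst hvy
        exact ⟨v, Sxw, block_rel hbvz⟩
      · exact step v hvz hbvz hvy
    · have h1 : S (x ⊔ y) (w ⊔ z) := tol_sup hS Sxw Syz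
      rw [sup_eq_right.mpr hxy.le] at h1
      have hlt : y < w ⊔ z := lt_of_lt_of_le hyz.lt le_sup_right
      have hcov := (rel_lt hS h1 hlt).1
      have hz : w ⊔ z = z := by
        rcases eq_or_lt_of_le (le_sup_right : z ≤ w ⊔ z) with h | h
        · exact h.symm
        · exact absurd h (hcov.2 hyz.lt)
      have hwz : w ≤ z := le_sup_left.trans hz.le
      have h2 : T (x ⊔ w) (y ⊔ w) := tol_sup hT Txy (tol_refl hT w)
      rw [sup_eq_right.mpr hxw.le] at h2
      have hwy' : ¬ w ≤ y := by
        intro hh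
        rcases eq_or_lt_of_le hh with h' | h'
        · exact hwy h'
        · exact hxy.2 hxw.lt h'
      have hyw : y ⊔ w = z := by
        have hlt2 : y < y ⊔ w :=
          lt_of_le_of_ne le_sup_left (fun hh => hwy' (le_sup_right.trans hh.ge))
        have hle : y ⊔ w ≤ z := sup_le hyz.le hwz
        rcases eq_or_lt_of_le hle with h | h
        · exact h
        · exact absurd h (hyz.2 hlt2)
      rw [hyw] at h2
      exact ⟨w, Sxw, h2⟩
  · rcases top_or_bottom hS x with htop | hbot'
    · obtain ⟨p, hpx, hbpx⟩ := htop
      obtain ⟨w', hTpw', hSw'y⟩ :=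
        IH p hpx.lt S T hS hT (amic_symm hami) x y hpx hxy hbpx hbT
      rcases rel_cases hT hTpw' with h | ⟨hc, hb⟩ | ⟨hc, hb⟩
      · exfalso
        subst h
        rcases rel_cases hS hSw'y with h2 | ⟨hc2, -⟩ | ⟨hc2, -⟩
        · exact lt_irrefl _ (h2 ▸ (hpx.lt.trans hxy.lt))
        · exact hc2.2 hpx.lt hxy.lt
        · exact lt_asymm hc2.lt (hpx.lt.trans hxy.lt)
      · rcases rel_cases hS hSw'y with h2 | ⟨hc2, hb2⟩ | ⟨hc2, hb2⟩
        · exfalso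
          subst h2
          exact hc.2 hpx.lt hxy.lt
        · have htT : IsRTop T y := ⟨x, hxy, hbT⟩
          have htS : IsRTop S y := ⟨w', hc2, hb2⟩
          obtain ⟨htTz, -⟩ := hami.1 y z htT htS hyz (Or.inr Syz)
          obtain ⟨v, hvz, hbvz⟩ := htTz
          by_cases hvy : v = y
          · exfalso
            subst hvy
            have hbotT : IsRBottom T v := ⟨z, hyz, hbvz⟩
            have hbotS : IsRBottom S v := ⟨z, hyz, hbS⟩
            obtain ⟨-, hxS⟩ := hami.2 v x hbotT hbotS hxy (Or.inl Txy)
            exact hbot hxS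
          · exact step v hvz hbvz hvy
        · exfalso
          exact hc.2 hpx.lt (hxy.lt.trans hc2.lt)
      · exfalso
        rcases rel_cases hS hSw'y with h2 | ⟨hc2, -⟩ | ⟨hc2, -⟩
        · subst h2
          exact lt_asymm hc.lt (hpx.lt.trans hxy.lt)
        · exact hc2.2 hc.lt (hpx.lt.trans hxy.lt)
        · exact lt_asymm hc2.lt ((hc.lt.trans hpx.lt).trans hxy.lt)
    · exact absurd hbot' hbot

lemma key' {L : Type*} [Lattice L] (hwf : WellFounded ((· > ·) : L → L → Prop)) :
    ∀ x : L, ∀ T S : L → L → Prop, IsTwoUniform T → IsTwoUniform S → Amicable T S →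
      ∀ y z : L, y ⋖ x → z ⋖ y → IsBlock T {y, x} → IsBlock S {z, y} →
      ∃ w, S x w ∧ T w z := by
  refine fun x => hwf.induction
    (C := fun x => ∀ T S : L → L → Prop, IsTwoUniform T → IsTwoUniform S → Amicable T S →
      ∀ y z : L, y ⋖ x → z ⋖ y → IsBlock T {y, x} → IsBlock S {z, y} →
      ∃ w, S x w ∧ T w z) x ?_
  intro x IH T S hT hS hami y z hyx hzy hbT hbS
  have Txy : T x y := block_rel' hbT
  have Syz : S y z := block_rel' hbS
  have step : ∀ v, z ⋖ v → IsBlock T {z, v} → v ≠ y → ∃ w, S x w ∧ T w z := by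
    intro v hzv hbzv hvy
    have Tvz : T v z := block_rel' hbzv
    have h1 : T (x ⊔ v) (y ⊔ z) := tol_sup hT Txy Tvz
    rw [sup_eq_left.mpr hzy.le] at h1
    have hxv : x ⊔ v = x := by
      rcases eq_or_lt_of_le (le_sup_left : x ≤ x ⊔ v) with h | h
      · exact h.symm
      · have hlt : y < x ⊔ v := hyx.lt.trans h
        have hcov := (rel_lt hT (tol_symm hT _ _ h1) hlt).1
        exact absurd h (hcov.2 hyx.lt)
    have hvlex : v ≤ x := le_sup_right.trans hxv.le
    have hyv : y ⊔ v = x := by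
      have hle : y ⊔ v ≤ x := sup_le hyx.le hvlex
      rcases eq_or_lt_of_le hle with h | h
      · exact h
      · exfalso
        have hvley : ¬ v ≤ y := by
          intro hh
          rcases eq_or_lt_of_le hh with h' | h'
          · exact hvy h'
          · exact hzy.2 hzv.lt h'
        have hlt2 : y < y ⊔ v :=
          lt_of_le_of_ne le_sup_left (fun hh => hvley (le_sup_right.trans hh.ge))
        exact hyx.2 hlt2 h
    have h2 : S (y ⊔ v) (z ⊔ v) := tol_sup hS Syz (tol_refl hS v)
    rw [hyv, sup_eq_right.mpr hzv.le] at h2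
    exact ⟨v, h2, Tvz⟩
  by_cases htop : IsRTop S x
  · obtain ⟨w, hwx, hbw⟩ := htop
    have Sxw : S x w := block_rel' hbw
    by_cases hwy : w = y
    · subst hwy
      have hbT' : IsRBottom T w := ⟨x, hyx, hbT⟩
      have hbS' : IsRBottom S w := ⟨x, hyx, hbw⟩
      obtain ⟨hbTz, -⟩ := hami.2 w z hbT' hbS' hzy (Or.inr (tol_symm hS _ _ Syz))
      obtain ⟨v, hzv, hbzv⟩ := hbTz
      by_cases hvy : v = w
      · subst hvy
        exact ⟨v, Sxw, block_rel' hbzv⟩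
      · exact step v hzv hbzv hvy
    · have h1 : S (x ⊓ y) (w ⊓ z) := tol_inf hS Sxw Syz
      rw [inf_eq_right.mpr hyx.le] at h1
      have hlt : w ⊓ z < y := lt_of_le_of_lt inf_le_right hzy.lt
      have hcov := (rel_lt hS (tol_symm hS _ _ h1) hlt).1
      have hz : w ⊓ z = z := by
        rcases eq_or_lt_of_le (inf_le_right : w ⊓ z ≤ z) with h | h
        · exact h
        · exact absurd hzy.lt (hcov.2 h)
      have hzw : z ≤ w := hz.ge.trans inf_le_left
      have h2 : T (x ⊓ w) (y ⊓ w) := tol_inf hT Txy (tol_refl hT w)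
      rw [inf_eq_right.mpr hwx.le] at h2
      have hwy' : ¬ y ≤ w := by
        intro hh
        rcases eq_or_lt_of_le hh with h' | h'
        · exact hwy h'.symm
        · exact hyx.2 h' hwx.lt
      have hyw : y ⊓ w = z := by
        have hlt2 : y ⊓ w < y :=
          lt_of_le_of_ne inf_le_left (fun hh => hwy' (hh.ge.trans inf_le_right))
        have hle : z ≤ y ⊓ w := le_inf hzy.le hzw
        rcases eq_or_lt_of_le hle with h | h
        · exact h.symm
        · exact absurd hlt2 (hzy.2 h)
      rw [hyw] at h2
      exact ⟨w, Sxw, h2⟩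
  · rcases top_or_bottom hS x with htop' | hbotx
    · exact absurd htop' htop
    · obtain ⟨p, hxp, hbxp⟩ := hbotx
      obtain ⟨w', hTpw', hSw'y⟩ :=
        IH p hxp.lt S T hS hT (amic_symm hami) x y hxp hyx hbxp hbT
      rcases rel_cases hT hTpw' with h | ⟨hc, hb⟩ | ⟨hc, hb⟩
      · exfalso
        subst h
        rcases rel_cases hS hSw'y with h2 | ⟨hc2, -⟩ | ⟨hc2, -⟩
        · exact lt_irrefl y (h2 ▸ (hyx.lt.trans hxp.lt))
        · exact lt_asymm hc2.lt (hyx.lt.trans hxp.lt)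
        · exact hc2.2 hyx.lt hxp.lt
      · exfalso
        rcases rel_cases hS hSw'y with h2 | ⟨hc2, -⟩ | ⟨hc2, -⟩
        · exact lt_asymm (h2 ▸ hc.lt) (hyx.lt.trans hxp.lt)
        · exact lt_asymm hc2.lt ((hyx.lt.trans hxp.lt).trans hc.lt)
        · exact hc2.2 hyx.lt (hxp.lt.trans hc.lt)
      · rcases rel_cases hS hSw'y with h2 | ⟨hc2, hb2⟩ | ⟨hc2, hb2⟩
        · exfalso
          subst h2
          exact hc.2 hyx.lt hxp.lt
        · exfalso
          exact hc.2 hc2.lt (hyx.lt.trans hxp.lt)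
        · have hbT' : IsRBottom T y := ⟨x, hyx, hbT⟩
          have hbS' : IsRBottom S y := ⟨w', hc2, hb2⟩
          obtain ⟨hbTz, -⟩ := hami.2 y z hbT' hbS' hzy (Or.inr (tol_symm hS _ _ Syz))
          obtain ⟨v, hzv, hbzv⟩ := hbTz
          by_cases hvy : v = y
          · exfalso
            subst hvy
            have htT : IsRTop T v := ⟨z, hzy, hbzv⟩
            have htS : IsRTop S v := ⟨z, hzy, hbS⟩
            obtain ⟨-, hxT⟩ := hami.1 v x htT htS hyx (Or.inl (tol_symm hT _ _ Txy))
            exact htop hxT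
          · exact step v hzv hbzv hvy

theorem stmt11 {L : Type*} [Lattice L] (hL : NoInfiniteChains L)
    (T S : L → L → Prop) (hT : IsTwoUniform T) (hS : IsTwoUniform S)
    (hami : Amicable T S) :
    ∀ x z, Comp T S x z → Comp S T x z := by
  rintro x z ⟨y, Txy, Syz⟩
  rcases rel_cases hT Txy with rfl | ⟨hxy, hbT⟩ | ⟨hyx, hbT⟩
  · exact ⟨z, Syz, tol_refl hT z⟩
  · rcases rel_cases hS Syz with rfl | ⟨hyz, hbS⟩ | ⟨hzy, hbS⟩
    · exact ⟨x, tol_refl hS x, Txy⟩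
    · exact key (wf_lt hL) x T S hT hS hami y z hxy hyz hbT hbS
    · have h1 : S (y ⊓ x) (z ⊓ x) := tol_inf hS Syz (tol_refl hS x)
      rw [inf_eq_right.mpr hxy.le] at h1
      have h2 : T (x ⊓ z) (y ⊓ z) := tol_inf hT Txy (tol_refl hT z)
      rw [inf_eq_right.mpr hzy.le] at h2
      exact ⟨x ⊓ z, by rwa [inf_comm z x] at h1, h2⟩
  · rcases rel_cases hS Syz with rfl | ⟨hyz, hbS⟩ | ⟨hzy, hbS⟩
    · exact ⟨x, tol_refl hS x, Txy⟩
    · have h1 : S (y ⊔ x) (z ⊔ x) := tol_sup hS Syz (tol_refl hS x)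
      rw [sup_eq_right.mpr hyx.le] at h1
      have h2 : T (x ⊔ z) (y ⊔ z) := tol_sup hT Txy (tol_refl hT z)
      rw [sup_eq_right.mpr hyz.le] at h2
      exact ⟨x ⊔ z, by rwa [sup_comm z x] at h1, h2⟩
    · exact key' (wf_gt hL) x T S hT hS hami y z hyx hzy hbT hbS
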